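/- Let U be an (n+k) × (n+k) unitary matrix written in block form U = [[U₁₁, U₁₂],[U₂₁, U₂₂]] with U₁₁ of size n × n and U₂₂ of size k × k. Define Ξ(z) = U₁₁ + z U₁₂ (I − z U₂₂)⁻¹ U₂₁ for z ∈ ℂ with det(I − z U₂₂) ≠ 0. Then for every z on the unit circle where Ξ is defined, Ξ(z) is a unitary matrix; moreover I − Ξ(z)*Ξ(z) = (1 − |z|²) U₂₁*(I − z̄ U₂₂*)⁻¹(I − z U₂₂)⁻¹ U₂₁ wherever defined. -/

import Mathlib

/-!
Put `X = (1 - z D)⁻¹ C`, so that `X = C + D (z X)` and `Ξ(z) = A + B (z X)`. The block matrix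
`V = [[A, B], [C, D]]` therefore maps the column `(1, z X)` to `(Ξ(z), X)`, and since `Vᴴ V = 1`
both columns have the same Gram matrix: `Ξ(z)ᴴ Ξ(z) + Xᴴ X = 1 + |z|² Xᴴ X`. This is the defect
identity, and for `|z| = 1` it says `Ξ(z)ᴴ Ξ(z) = 1`.
-/

open Matrix

namespace Matrix

variable {R ι m n p : Type*} [Fintype n]

theorem conjTranspose_fromRows_mul_fromRows [Fintype m] [Semiring R] [StarRing R]
    (P : Matrix m ι R) (Q : Matrix n ι R) :
    (fromRows P Q)ᴴ * fromRows P Q = Pᴴ * P + Qᴴ * Q := by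
  rw [conjTranspose_fromRows_eq_fromCols_conjTranspose, fromCols_mul_fromRows]

theorem conjTranspose_mul_self_add_of_isometry_fromBlocks [Fintype m] [Fintype p]
    [Semiring R] [StarRing R] [DecidableEq m] [DecidableEq n]
    {A : Matrix p m R} {B : Matrix p n R} {C : Matrix n m R} {D : Matrix n n R}
    (hV : (fromBlocks A B C D)ᴴ * fromBlocks A B C D = 1) (P : Matrix m ι R) (Q : Matrix n ι R) :
    (A * P + B * Q)ᴴ * (A * P + B * Q) + (C * P + D * Q)ᴴ * (C * P + D * Q) =
      Pᴴ * P + Qᴴ * Q := by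
  rw [← conjTranspose_fromRows_mul_fromRows, ← conjTranspose_fromRows_mul_fromRows,
    ← fromBlocks_mul_fromRows, conjTranspose_mul, Matrix.mul_assoc,
    ← Matrix.mul_assoc _ _ (fromRows P Q), hV, Matrix.one_mul]

variable [CommRing R] [DecidableEq n]

noncomputable def transferFunction (A : Matrix p m R) (B : Matrix p n R) (C : Matrix n m R)
    (D : Matrix n n R) (z : R) : Matrix p m R :=
  A + z • (B * (1 - z • D)⁻¹ * C)

theorem add_mul_smul_nonsing_inv_mul {C : Matrix n m R} {D : Matrix n n R} {z : R}
    (hz : IsUnit (1 - z • D)) :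
    C + D * (z • ((1 - z • D)⁻¹ * C)) = (1 - z • D)⁻¹ * C := by
  have hinv : (1 - z • D) * (1 - z • D)⁻¹ = 1 :=
    mul_nonsing_inv _ ((isUnit_iff_isUnit_det _).mp hz)
  calc C + D * (z • ((1 - z • D)⁻¹ * C))
      = C + z • D * (1 - z • D)⁻¹ * C := by
        rw [Matrix.mul_smul, Matrix.smul_mul, Matrix.smul_mul, Matrix.mul_assoc]
    _ = (1 - z • D) * (1 - z • D)⁻¹ * C + z • D * (1 - z • D)⁻¹ * C := by
        rw [hinv, Matrix.one_mul]
    _ = (1 - z • D)⁻¹ * C := by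
        rw [← Matrix.add_mul, ← Matrix.add_mul, sub_add_cancel, Matrix.one_mul]

variable [Fintype m] [DecidableEq m] [StarRing R]
  {A : Matrix m m R} {B : Matrix m n R} {C : Matrix n m R} {D : Matrix n n R}

theorem one_sub_conjTranspose_transferFunction_mul_self
    (hV : (fromBlocks A B C D)ᴴ * fromBlocks A B C D = 1) {z : R} (hz : IsUnit (1 - z • D)) :
    1 - (transferFunction A B C D z)ᴴ * transferFunction A B C D z =
      (1 - star z * z) • (Cᴴ * (1 - star z • Dᴴ)⁻¹ * (1 - z • D)⁻¹ * C) := by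
  set X := (1 - z • D)⁻¹ * C
  have hGram : Cᴴ * (1 - star z • Dᴴ)⁻¹ * (1 - z • D)⁻¹ * C = Xᴴ * X := by
    simp only [X, conjTranspose_mul, conjTranspose_nonsing_inv, conjTranspose_sub,
      conjTranspose_one, conjTranspose_smul, Matrix.mul_assoc]
  have hOutput : A * 1 + B * (z • X) = transferFunction A B C D z := by
    rw [transferFunction, Matrix.mul_one, Matrix.mul_smul, Matrix.mul_assoc]
  have h := conjTranspose_mul_self_add_of_isometry_fromBlocks hV 1 (z • X)
  rw [hOutput, Matrix.mul_one, add_mul_smul_nonsing_inv_mul hz, conjTranspose_smul,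
    Matrix.smul_mul, Matrix.mul_smul, smul_smul, conjTranspose_one, Matrix.one_mul] at h
  rw [hGram]
  linear_combination (norm := module) -h

theorem transferFunction_mem_unitaryGroup
    (hV : (fromBlocks A B C D)ᴴ * fromBlocks A B C D = 1) {z : R} (hz1 : star z * z = 1)
    (hz : IsUnit (1 - z • D)) :
    transferFunction A B C D z ∈ unitaryGroup m R := by
  have h := one_sub_conjTranspose_transferFunction_mul_self hV hz
  rw [hz1, sub_self, zero_smul, sub_eq_zero] at h
  exact mem_unitaryGroup_iff'.mpr h.symm

end Matrix

theorem stmt1 (n k : ℕ)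
    (U11 : Matrix (Fin n) (Fin n) ℂ) (U12 : Matrix (Fin n) (Fin k) ℂ)
    (U21 : Matrix (Fin k) (Fin n) ℂ) (U22 : Matrix (Fin k) (Fin k) ℂ)
    (hU : Matrix.fromBlocks U11 U12 U21 U22 ∈ Matrix.unitaryGroup (Fin n ⊕ Fin k) ℂ) :
    (∀ z : ℂ, ‖z‖ = 1 → IsUnit (1 - z • U22) →
      U11 + z • (U12 * (1 - z • U22)⁻¹ * U21) ∈ Matrix.unitaryGroup (Fin n) ℂ) ∧
    (∀ z : ℂ, IsUnit (1 - z • U22) →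
      1 - (U11 + z • (U12 * (1 - z • U22)⁻¹ * U21))ᴴ *
            (U11 + z • (U12 * (1 - z • U22)⁻¹ * U21)) =
        (((1 - ‖z‖ ^ 2 : ℝ) : ℂ)) •
          (U21ᴴ * (1 - (starRingEnd ℂ z) • U22ᴴ)⁻¹ * (1 - z • U22)⁻¹ * U21)) := by
  have hV := mem_unitaryGroup_iff'.mp hU
  have hnorm (z : ℂ) : star z * z = ((‖z‖ ^ 2 : ℝ) : ℂ) := by
    rw [Complex.star_def, Complex.conj_mul', Complex.ofReal_pow]
  refine ⟨fun z hz1 hz ↦ transferFunction_mem_unitaryGroup hV ?_ hz, fun z hz ↦ ?_⟩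
  · rw [hnorm, hz1]
    norm_num
  · rw [Complex.ofReal_sub, Complex.ofReal_one, ← hnorm]
    exact one_sub_conjTranspose_transferFunction_mul_self hV hz
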